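/- Let 0 ≠ v ∈ P and set vAv := {vav : a ∈ A} = {b ∈ A : b = bv = vb}. Then vAv is closed in the norm topology of A, and for every b ∈ vAv: there exists n ∈ ℕ with b ≤ n·v; for 0 < λ ∈ ℝ, −λ·v ≤ b ≤ λ·v ⇔ −λ·1 ≤ b ≤ λ·1, so ‖b‖ = inf{λ > 0 : −λv ≤ b ≤ λv}; if 0 ≤ b then b^{1/2} ∈ vAv; b° ∈ vAv; and if v ≤ b ∈ vAv then there exists c ∈ vAv with bc = cb = v. -/

import Mathlib

/-- A synaptic algebra: a real vector subspace `carrier` of a unital associative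
real algebra `R`, containing `1`, equipped with a positive cone `Pos` making it a
partially ordered archimedean real vector space with order unit `1`, and
satisfying conditions [SA2]–[SA9]. The partial order is `a ≤ b ↔ b - a ∈ Pos`. -/
structure SynapticAlgebra (R : Type*) [Ring R] [Algebra ℝ R] where
  carrier : Set R
  one_mem : (1 : R) ∈ carrier
  add_mem : ∀ {a b : R}, a ∈ carrier → b ∈ carrier → a + b ∈ carrier
  smul_mem : ∀ (t : ℝ) {a : R}, a ∈ carrier → t • a ∈ carrier
  neg_mem : ∀ {a : R}, a ∈ carrier → -a ∈ carrier
  Pos : Set R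
  pos_subset : Pos ⊆ carrier
  pos_add : ∀ {a b : R}, a ∈ Pos → b ∈ Pos → a + b ∈ Pos
  pos_smul : ∀ {t : ℝ}, 0 ≤ t → ∀ {a : R}, a ∈ Pos → t • a ∈ Pos
  pos_antisymm : ∀ {a : R}, a ∈ Pos → -a ∈ Pos → a = 0
  arch : ∀ {a b : R}, a ∈ carrier → b ∈ carrier →
    (∀ n : ℕ, b - (n : ℝ) • a ∈ Pos) → -a ∈ Pos
  one_pos : (1 : R) ∈ Pos
  orderUnit : ∀ {a : R}, a ∈ carrier → ∃ n : ℕ, (n : ℝ) • (1 : R) - a ∈ Pos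
  SA2 : ∀ {a b : R}, a ∈ Pos → b ∈ Pos → a * b = b * a → a * b ∈ Pos
  SA3 : ∀ {a : R}, a ∈ carrier → a * a ∈ Pos
  SA4 : ∀ {a b : R}, a ∈ Pos → b ∈ Pos → a * b * a ∈ Pos
  SA5 : ∀ {a b : R}, a ∈ carrier → b ∈ Pos → a * b * a = 0 → a * b = 0 ∧ b * a = 0
  SA6 : ∀ {a : R}, a ∈ Pos →
    ∃ b : R, b ∈ Pos ∧ (∀ c ∈ carrier, c * a = a * c → c * b = b * c) ∧ b * b = a
  SA7 : ∀ {a : R}, a ∈ carrier →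
    ∃ p : R, p ∈ carrier ∧ p * p = p ∧ ∀ b ∈ carrier, (a * b = 0 ↔ p * b = 0)
  SA8 : ∀ {a : R}, a ∈ carrier → a - 1 ∈ Pos → ∃ b ∈ carrier, a * b = 1 ∧ b * a = 1
  SA9 : ∀ {a b : R}, a ∈ carrier → b ∈ carrier → ∀ s : ℕ → R,
    (∀ n, s n ∈ carrier) → (∀ n, s (n + 1) - s n ∈ Pos) →
    (∀ m n, s m * s n = s n * s m) → (∀ n, s n * b = b * s n) →
    (∀ ε : ℝ, 0 < ε →
      ∃ N : ℕ, ∀ n ≥ N, (a - s n) - (-ε) • (1 : R) ∈ Pos ∧ ε • (1 : R) - (a - s n) ∈ Pos) →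
    a * b = b * a

namespace SynapticAlgebra

variable {R : Type*} [Ring R] [Algebra ℝ R]

/-- The partial order of the synaptic algebra: `a ≤ b` iff `b - a` is in the positive cone. -/
def le (S : SynapticAlgebra R) (a b : R) : Prop := b - a ∈ S.Pos

/-- The identification of a real number `t` with the element `t·1` of the algebra. -/
def scal (_ : SynapticAlgebra R) (t : ℝ) : R := t • (1 : R)

/-- The order-unit norm: `‖a‖ = inf {t : ℝ | 0 < t ∧ -t·1 ≤ a ≤ t·1}`. -/
noncomputable def nrm (S : SynapticAlgebra R) (a : R) : ℝ :=
  sInf {t : ℝ | 0 < t ∧ S.le (S.scal (-t)) a ∧ S.le a (S.scal t)}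

/-- `p` is a projection: an idempotent element of the algebra. -/
def IsProj (S : SynapticAlgebra R) (p : R) : Prop := p ∈ S.carrier ∧ p * p = p

/-- `e` is an effect: an element with `0 ≤ e ≤ 1`. -/
def IsEff (S : SynapticAlgebra R) (e : R) : Prop := e ∈ S.carrier ∧ S.le 0 e ∧ S.le e 1

/-- `b ∈ CC(a)`: `b` is in the algebra and commutes with every element of the
algebra that commutes with `a` (the double commutant of `a`). -/
def inCC (S : SynapticAlgebra R) (a b : R) : Prop :=
  b ∈ S.carrier ∧ ∀ c ∈ S.carrier, c * a = a * c → c * b = b * c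

/-- The square root of a positive element (chosen via [SA6]; it is unique). -/
noncomputable def sqrt (S : SynapticAlgebra R) (a : R) : R :=
  @dite R (a ∈ S.Pos) (Classical.dec _) (fun h => Classical.choose (S.SA6 h)) (fun _ => 0)

/-- The carrier projection `a°` of `a` (chosen via [SA7]; it is unique):
the projection `p` such that for all `b` in the algebra, `ab = 0 ↔ pb = 0`. -/
noncomputable def carr (S : SynapticAlgebra R) (a : R) : R :=
  @dite R (a ∈ S.carrier) (Classical.dec _) (fun h => Classical.choose (S.SA7 h)) (fun _ => 0)

/-- Absolute value: `|a| := (a²)^{1/2}`. -/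
noncomputable def abs (S : SynapticAlgebra R) (a : R) : R := S.sqrt (a * a)

/-- Positive part: `a⁺ := ½(|a| + a)`. -/
noncomputable def posPart (S : SynapticAlgebra R) (a : R) : R := (1/2 : ℝ) • (S.abs a + a)

/-- Negative part: `a⁻ := ½(|a| − a)`. -/
noncomputable def negPart (S : SynapticAlgebra R) (a : R) : R := (1/2 : ℝ) • (S.abs a - a)

/-- Signum: `sgn(a) := (a⁺)° − (a⁻)°`. -/
noncomputable def sgn (S : SynapticAlgebra R) (a : R) : R :=
  S.carr (S.posPart a) - S.carr (S.negPart a)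

/-- The Sasaki mapping: `φ_a(b) := (aba)°`. -/
noncomputable def sas (S : SynapticAlgebra R) (a b : R) : R := S.carr (a * b * a)

/-- `m` is the infimum of the projections `p` and `q` in the poset `P` of projections. -/
def IsMeet (S : SynapticAlgebra R) (p q m : R) : Prop :=
  S.IsProj m ∧ S.le m p ∧ S.le m q ∧ ∀ r, S.IsProj r → S.le r p → S.le r q → S.le r m

/-- `j` is the supremum of the projections `p` and `q` in the poset `P` of projections. -/
def IsJoin (S : SynapticAlgebra R) (p q j : R) : Prop :=
  S.IsProj j ∧ S.le p j ∧ S.le q j ∧ ∀ r, S.IsProj r → S.le p r → S.le q r → S.le j r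

end SynapticAlgebra

open SynapticAlgebra Filter

variable {R : Type*} [Ring R] [Algebra ℝ R]

/-!
Everything follows from the compression `b ↦ v b v`, which is positive ([SA4]), fixes the corner
`vAv` pointwise and sends `t·1` to `t·v ≤ t·1`. Hence bounds by multiples of `1` and of `v`
agree on `vAv`, and a norm limit `b` of corner elements satisfies `‖b - v b v‖ ≤ 2‖b - sₙ‖`, so
`b = v b v` by the archimedean property. For the square root `r` of `b ∈ vAv` one has
`(r - v r)² = 0`, which forces `r = v r` by [SA5]. The carrier of `b` annihilates `1 - v` because
`b` does. Finally, if `v ≤ b` then `b + (1 - v) ≥ 1` is invertible by [SA8], and its inverse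
compressed to `vAv` inverts `b` there.
-/

namespace SynapticAlgebra

section Basic

variable (S : SynapticAlgebra R)

lemma sub_mem {a b : R} (ha : a ∈ S.carrier) (hb : b ∈ S.carrier) : a - b ∈ S.carrier := by
  rw [sub_eq_add_neg]
  exact S.add_mem ha (S.neg_mem hb)

lemma le_trans {a b c : R} (hab : S.le a b) (hbc : S.le b c) : S.le a c := by
  have h := S.pos_add hbc hab
  rwa [show c - b + (b - a) = c - a by abel] at h

lemma sub_le_sub {a b c d : R} (hab : S.le a b) (hcd : S.le c d) : S.le (a - d) (b - c) := by
  have h := S.pos_add hab hcd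
  rwa [show b - a + (d - c) = b - c - (a - d) by abel] at h

lemma neg_le_neg {a b : R} (hab : S.le a b) : S.le (-b) (-a) := by
  rwa [SynapticAlgebra.le, neg_sub_neg]

lemma scal_neg (t : ℝ) : S.scal (-t) = -S.scal t :=
  neg_smul t 1

lemma scal_le_scal {s t : ℝ} (h : s ≤ t) : S.le (S.scal s) (S.scal t) := by
  show t • (1 : R) - s • 1 ∈ S.Pos
  rw [← sub_smul]
  exact S.pos_smul (by linarith) S.one_pos

lemma exists_eq_sub_of_mem {a : R} (ha : a ∈ S.carrier) :
    ∃ p ∈ S.Pos, ∃ q ∈ S.Pos, a = p - q := by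
  obtain ⟨n, hn⟩ := S.orderUnit (S.neg_mem ha)
  exact ⟨(n : ℝ) • 1 - -a, hn, (n : ℝ) • 1, S.pos_smul n.cast_nonneg S.one_pos, by abel⟩

lemma conj_mem_of_pos {p b : R} (hp : p ∈ S.Pos) (hb : b ∈ S.carrier) :
    p * b * p ∈ S.carrier := by
  obtain ⟨b₁, h₁, b₂, h₂, rfl⟩ := S.exists_eq_sub_of_mem hb
  rw [show p * (b₁ - b₂) * p = p * b₁ * p - p * b₂ * p by noncomm_ring]
  exact S.sub_mem (S.pos_subset (S.SA4 hp h₁)) (S.pos_subset (S.SA4 hp h₂))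

lemma conj_mem {a b : R} (ha : a ∈ S.carrier) (hb : b ∈ S.carrier) :
    a * b * a ∈ S.carrier := by
  obtain ⟨p, hp, q, hq, rfl⟩ := S.exists_eq_sub_of_mem ha
  have hpq := S.pos_add hp hq
  rw [show (p - q) * b * (p - q) =
      (p * b * p + q * b * q + (p * b * p + q * b * q)) - (p + q) * b * (p + q) by
    noncomm_ring]
  have hsum := S.add_mem (S.conj_mem_of_pos hp hb) (S.conj_mem_of_pos hq hb)
  exact S.sub_mem (S.add_mem hsum hsum) (S.conj_mem_of_pos hpq hb)

lemma conj_le_conj {v a b : R} (hv : v ∈ S.Pos) (hab : S.le a b) :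
    S.le (v * a * v) (v * b * v) := by
  show v * b * v - v * a * v ∈ S.Pos
  rw [show v * b * v - v * a * v = v * (b - a) * v by noncomm_ring]
  exact S.SA4 hv hab

lemma nrm_set_nonempty {a : R} (ha : a ∈ S.carrier) :
    {t : ℝ | 0 < t ∧ S.le (S.scal (-t)) a ∧ S.le a (S.scal t)}.Nonempty := by
  obtain ⟨n, hn⟩ := S.orderUnit ha
  obtain ⟨m, hm⟩ := S.orderUnit (S.neg_mem ha)
  have hn₀ : (0 : ℝ) ≤ n := n.cast_nonneg
  have hm₀ : (0 : ℝ) ≤ m := m.cast_nonneg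
  have hlo := S.neg_le_neg (S.le_trans hm (S.scal_le_scal (show (m : ℝ) ≤ n + m + 1 by linarith)))
  rw [neg_neg, ← scal_neg] at hlo
  exact ⟨n + m + 1, by positivity, hlo, S.le_trans hn (S.scal_le_scal (by linarith))⟩

lemma bounds_of_nrm_lt {a : R} (ha : a ∈ S.carrier) {ε : ℝ} (h : S.nrm a < ε) :
    S.le (S.scal (-ε)) a ∧ S.le a (S.scal ε) := by
  obtain ⟨t, ⟨-, hlo, hhi⟩, hlt⟩ :=
    (csInf_lt_iff ⟨0, fun t ht => ht.1.le⟩ (S.nrm_set_nonempty ha)).mp h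
  exact ⟨S.le_trans (S.scal_le_scal (by linarith)) hlo, S.le_trans hhi (S.scal_le_scal hlt.le)⟩

lemma mem_pos_of_forall_scal_neg_le {e : R} (he : e ∈ S.carrier)
    (h : ∀ ε : ℝ, 0 < ε → S.le (S.scal (-ε)) e) : e ∈ S.Pos := by
  rw [← neg_neg e]
  refine S.arch (S.neg_mem he) S.one_mem fun n => ?_
  have hε : (0 : ℝ) < 1 / (n + 1) := by positivity
  have h' := S.pos_add (S.pos_smul n.cast_nonneg (h _ hε)) (S.pos_smul hε.le S.one_pos)
  rwa [show (n : ℝ) • (e - S.scal (-(1 / (n + 1)))) + (1 / ((n : ℝ) + 1)) • (1 : R)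
      = 1 - (n : ℝ) • -e by
    simp only [SynapticAlgebra.scal]
    match_scalars <;> field_simp] at h'

lemma eq_zero_of_forall_bounds {d : R} (hd : d ∈ S.carrier)
    (h : ∀ ε : ℝ, 0 < ε → S.le (S.scal (-ε)) d ∧ S.le d (S.scal ε)) : d = 0 := by
  refine S.pos_antisymm (S.mem_pos_of_forall_scal_neg_le hd fun ε hε => (h ε hε).1)
    (S.mem_pos_of_forall_scal_neg_le (S.neg_mem hd) fun ε hε => ?_)
  rw [scal_neg]
  exact S.neg_le_neg (h ε hε).2

lemma eq_zero_of_mul_self_eq_zero {a : R} (ha : a ∈ S.carrier) (h : a * a = 0) : a = 0 := by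
  simpa using (S.SA5 ha S.one_pos (by rw [mul_one, h])).1

lemma sqrt_spec {a : R} (ha : a ∈ S.Pos) :
    S.sqrt a ∈ S.Pos ∧ (∀ c ∈ S.carrier, c * a = a * c → c * S.sqrt a = S.sqrt a * c) ∧
      S.sqrt a * S.sqrt a = a := by
  simpa only [SynapticAlgebra.sqrt, dif_pos ha] using Classical.choose_spec (S.SA6 ha)

lemma carr_spec {a : R} (ha : a ∈ S.carrier) :
    S.carr a ∈ S.carrier ∧ S.carr a * S.carr a = S.carr a ∧
      ∀ b ∈ S.carrier, (a * b = 0 ↔ S.carr a * b = 0) := by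
  simpa only [SynapticAlgebra.carr, dif_pos ha] using Classical.choose_spec (S.SA7 ha)

end Basic

/-- The corner `vAv` of the paper. -/
def corner (S : SynapticAlgebra R) (v : R) : Set R :=
  {b | b ∈ S.carrier ∧ b * v = b ∧ v * b = b}

section Corner

variable {S : SynapticAlgebra R} {v : R}

lemma IsProj.mem_pos (hv : S.IsProj v) : v ∈ S.Pos := by
  simpa [hv.2] using S.SA3 hv.1

lemma IsProj.le_one (hv : S.IsProj v) : S.le v 1 := by
  show 1 - v ∈ S.Pos
  simpa [show ((1 : R) - v) * (1 - v) = 1 - v by noncomm_ring [hv.2]]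
    using S.SA3 (S.sub_mem S.one_mem hv.1)

lemma exists_conj_iff_mem_corner (hv : S.IsProj v) (x : R) :
    (∃ a ∈ S.carrier, x = v * a * v) ↔ x ∈ S.corner v := by
  constructor
  · rintro ⟨a, ha, rfl⟩
    exact ⟨S.conj_mem hv.1 ha, by rw [mul_assoc, hv.2], by rw [← mul_assoc, ← mul_assoc, hv.2]⟩
  · rintro ⟨hx, hxv, hvx⟩
    exact ⟨x, hx, by rw [hvx, hxv]⟩

lemma conj_eq_of_mem_corner {b : R} (hb : b ∈ S.corner v) : v * b * v = b := by
  rw [hb.2.2, hb.2.1]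

lemma mul_mem_corner_of_commute (hv : S.IsProj v) {d : R} (hd : d ∈ S.carrier)
    (hvd : Commute v d) : v * d ∈ S.corner v :=
  (exists_conj_iff_mem_corner hv _).mp ⟨d, hd, by rw [mul_assoc, ← hvd.eq, ← mul_assoc, hv.2]⟩

lemma conj_scal (hv : S.IsProj v) (t : ℝ) : v * S.scal t * v = t • v := by
  rw [SynapticAlgebra.scal, mul_smul_comm, smul_mul_assoc, mul_one, hv.2]

lemma smul_le_scal (hv : S.IsProj v) {t : ℝ} (ht : 0 ≤ t) : S.le (t • v) (S.scal t) := by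
  show t • 1 - t • v ∈ S.Pos
  rw [← smul_sub]
  exact S.pos_smul ht hv.le_one

lemma bounds_scal_of_bounds_smul (hv : S.IsProj v) {t : ℝ} (ht : 0 ≤ t) {b : R}
    (h : S.le (-(t • v)) b ∧ S.le b (t • v)) : S.le (S.scal (-t)) b ∧ S.le b (S.scal t) := by
  refine ⟨S.le_trans ?_ h.1, S.le_trans h.2 (smul_le_scal hv ht)⟩
  rw [scal_neg]
  exact S.neg_le_neg (smul_le_scal hv ht)

lemma bounds_smul_of_bounds_scal (hv : S.IsProj v) {t : ℝ} {d : R}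
    (h : S.le (S.scal (-t)) d ∧ S.le d (S.scal t)) :
    S.le (-(t • v)) (v * d * v) ∧ S.le (v * d * v) (t • v) := by
  have hlo := S.conj_le_conj hv.mem_pos h.1
  have hhi := S.conj_le_conj hv.mem_pos h.2
  rw [conj_scal hv, neg_smul] at hlo
  rw [conj_scal hv] at hhi
  exact ⟨hlo, hhi⟩

lemma bounds_smul_iff_bounds_scal (hv : S.IsProj v) {t : ℝ} (ht : 0 ≤ t) {b : R}
    (hb : b ∈ S.corner v) :
    (S.le (-(t • v)) b ∧ S.le b (t • v)) ↔ (S.le (S.scal (-t)) b ∧ S.le b (S.scal t)) := by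
  refine ⟨bounds_scal_of_bounds_smul hv ht, fun h => ?_⟩
  simpa only [conj_eq_of_mem_corner hb] using bounds_smul_of_bounds_scal hv h

lemma bounds_sub_conj (hv : S.IsProj v) {t : ℝ} (ht : 0 ≤ t) {d : R}
    (h : S.le (S.scal (-t)) d ∧ S.le d (S.scal t)) :
    S.le (S.scal (-(2 * t))) (d - v * d * v) ∧ S.le (d - v * d * v) (S.scal (2 * t)) := by
  obtain ⟨hlo, hhi⟩ := bounds_scal_of_bounds_smul hv ht (bounds_smul_of_bounds_scal hv h)
  have hscal : ∀ s u : ℝ, S.scal s - S.scal u = S.scal (s - u) := fun s u => (sub_smul s u 1).symm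
  constructor
  · simpa only [hscal, show -t - t = -(2 * t) by ring] using S.sub_le_sub h.1 hhi
  · simpa only [hscal, show t - -t = 2 * t by ring] using S.sub_le_sub h.2 hlo

lemma mem_corner_of_tendsto (hv : S.IsProj v) {s : ℕ → R} (hs : ∀ n, s n ∈ S.corner v)
    {b : R} (hb : b ∈ S.carrier) (hlim : Tendsto (fun n => S.nrm (b - s n)) atTop (nhds 0)) :
    b ∈ S.corner v := by
  have hsmall : ∀ ε : ℝ, 0 < ε →
      S.le (S.scal (-ε)) (b - v * b * v) ∧ S.le (b - v * b * v) (S.scal ε) := by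
    intro ε hε
    obtain ⟨N, hN⟩ := Metric.tendsto_atTop.mp hlim (ε / 2) (by positivity)
    have hdist : S.nrm (b - s N) < ε / 2 := (le_abs_self _).trans_lt (by simpa using hN N le_rfl)
    have hbN := S.bounds_of_nrm_lt (S.sub_mem hb (hs N).1) hdist
    have hsub : b - s N - v * (b - s N) * v = b - v * b * v := by
      rw [mul_sub, sub_mul, conj_eq_of_mem_corner (hs N)]
      abel
    simpa only [hsub, mul_div_cancel₀ ε two_ne_zero] using bounds_sub_conj hv (by positivity) hbN
  have hfix : b = v * b * v :=
    sub_eq_zero.mp (S.eq_zero_of_forall_bounds (S.sub_mem hb (S.conj_mem hv.1 hb)) hsmall)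
  exact (exists_conj_iff_mem_corner hv b).mp ⟨b, hb, hfix⟩

lemma exists_le_nat_smul_of_mem_corner (hv : S.IsProj v) {b : R} (hb : b ∈ S.corner v) :
    ∃ n : ℕ, S.le b ((n : ℝ) • v) := by
  obtain ⟨n, hn⟩ := S.orderUnit hb.1
  have hn' : S.le b (S.scal n) := hn
  refine ⟨n, ?_⟩
  simpa only [conj_eq_of_mem_corner hb, conj_scal hv] using S.conj_le_conj hv.mem_pos hn'

lemma nrm_eq_sInf_of_mem_corner (hv : S.IsProj v) {b : R} (hb : b ∈ S.corner v) :
    S.nrm b = sInf {t : ℝ | 0 < t ∧ S.le (-(t • v)) b ∧ S.le b (t • v)} :=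
  congrArg sInf <| Set.ext fun _ =>
    and_congr_right fun ht => (bounds_smul_iff_bounds_scal hv ht.le hb).symm

lemma sqrt_mem_corner (hv : S.IsProj v) {b : R} (hb : b ∈ S.corner v) (hbpos : b ∈ S.Pos) :
    S.sqrt b ∈ S.corner v := by
  obtain ⟨hrpos, hrcomm, hrr⟩ := S.sqrt_spec hbpos
  set r := S.sqrt b
  have hvr : Commute v r := hrcomm v hv.1 (by rw [hb.2.1, hb.2.2])
  have hr : r ∈ S.carrier := S.pos_subset hrpos
  have hvb : v * b = b := hb.2.2
  have hsq : (r - v * r) * (r - v * r) = 0 := by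
    have hvrr : v * r * r = b := by rw [mul_assoc, hrr, hvb]
    have hrvr : r * (v * r) = b := by rw [← mul_assoc, ← hvr.eq, hvrr]
    have hvrvr : v * r * (v * r) = b := by rw [mul_assoc, hrvr, hvb]
    rw [sub_mul, mul_sub, mul_sub, hrr, hrvr, hvrr, hvrvr]
    abel
  have hrv : v * r = r := (sub_eq_zero.mp (S.eq_zero_of_mul_self_eq_zero
    (S.sub_mem hr (mul_mem_corner_of_commute hv hr hvr).1) hsq)).symm
  exact ⟨hr, by rw [← hvr.eq, hrv], hrv⟩

lemma carr_mem_corner (hv : S.IsProj v) {b : R} (hb : b ∈ S.corner v) :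
    S.carr b ∈ S.corner v := by
  obtain ⟨hpC, -, hann⟩ := S.carr_spec hb.1
  set p := S.carr b
  have hw : (1 : R) - v ∈ S.carrier := S.sub_mem S.one_mem hv.1
  have hpw : p * (1 - v) = 0 := (hann _ hw).mp (by rw [mul_sub, mul_one, hb.2.1, sub_self])
  have hpv : p * v = p := (sub_eq_zero.mp (by rwa [mul_sub, mul_one] at hpw)).symm
  have hwp : (1 - v) * p = 0 :=
    (S.SA5 hpC hv.le_one (by rw [hpw, zero_mul])).2
  exact ⟨hpC, hpv, (sub_eq_zero.mp (by rwa [sub_mul, one_mul] at hwp)).symm⟩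

lemma exists_inverse_in_corner (hv : S.IsProj v) {b : R} (hb : b ∈ S.corner v)
    (hvb : S.le v b) : ∃ c ∈ S.corner v, b * c = v ∧ c * b = v := by
  obtain ⟨x, hx_def⟩ : ∃ x, x = b + (1 - v) := ⟨_, rfl⟩
  have hx : x ∈ S.carrier := hx_def ▸ S.add_mem hb.1 (S.sub_mem S.one_mem hv.1)
  obtain ⟨d, hd, hxd, hdx⟩ := S.SA8 hx (by rwa [hx_def, show b + (1 - v) - 1 = b - v by abel])
  have hvx : v * x = b := by
    rw [hx_def, mul_add, hb.2.2, mul_sub, mul_one, hv.2, sub_self, add_zero]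
  have hxv : x * v = b := by
    rw [hx_def, add_mul, hb.2.1, sub_mul, one_mul, hv.2, sub_self, add_zero]
  have hvd : Commute v d :=
    Commute.units_inv_right (u := ⟨x, d, hxd, hdx⟩) (hvx.trans hxv.symm)
  have hbd : b * d = v := by rw [← hvx, mul_assoc, hxd, mul_one]
  have hdb : d * b = v := by rw [← hxv, ← mul_assoc, hdx, one_mul]
  refine ⟨v * d, mul_mem_corner_of_commute hv hd hvd, ?_, ?_⟩
  · rw [← mul_assoc, hb.2.1, hbd]
  · rw [mul_assoc, hdb, hv.2]

end Corner

end SynapticAlgebra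

theorem stmt15_general (S : SynapticAlgebra R) {v : R} (hv : S.IsProj v) :
    (∀ x : R, (∃ a ∈ S.carrier, x = v * a * v) ↔
      (x ∈ S.carrier ∧ x * v = x ∧ v * x = x)) ∧
    (∀ (s : ℕ → R), (∀ n, s n ∈ S.carrier ∧ s n * v = s n ∧ v * s n = s n) →
      ∀ b ∈ S.carrier, Tendsto (fun n => S.nrm (b - s n)) atTop (nhds 0) →
        (b ∈ S.carrier ∧ b * v = b ∧ v * b = b)) ∧
    (∀ b : R, (b ∈ S.carrier ∧ b * v = b ∧ v * b = b) →
      (∃ n : ℕ, S.le b ((n : ℝ) • v)) ∧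
      (∀ t : ℝ, 0 < t →
        ((S.le (-(t • v)) b ∧ S.le b (t • v)) ↔
          (S.le (S.scal (-t)) b ∧ S.le b (S.scal t)))) ∧
      (S.nrm b = sInf {t : ℝ | 0 < t ∧ S.le (-(t • v)) b ∧ S.le b (t • v)}) ∧
      (b ∈ S.Pos → (S.sqrt b * v = S.sqrt b ∧ v * S.sqrt b = S.sqrt b)) ∧
      (S.carr b * v = S.carr b ∧ v * S.carr b = S.carr b) ∧
      (S.le v b → ∃ c : R, (c ∈ S.carrier ∧ c * v = c ∧ v * c = c) ∧
        b * c = v ∧ c * b = v)) := by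
  refine ⟨exists_conj_iff_mem_corner hv,
    fun _ hs _ hb => mem_corner_of_tendsto hv hs hb, fun b hb => ?_⟩
  exact ⟨exists_le_nat_smul_of_mem_corner hv hb,
    fun t ht => bounds_smul_iff_bounds_scal hv ht.le hb,
    nrm_eq_sInf_of_mem_corner hv hb,
    fun hbpos => (sqrt_mem_corner hv hb hbpos).2,
    (carr_mem_corner hv hb).2,
    exists_inverse_in_corner hv hb⟩

/-- Theorem 4.11: for a nonzero projection `v`, the set `vAv = {vav : a ∈ A}
= {b ∈ A : b = bv = vb}` is norm closed, `v` is an order unit for it, the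
order-unit norm of `vAv` is the restriction of that of `A`, `vAv` is closed
under square roots and carriers, and elements `b` of `vAv` with `v ≤ b` are
invertible in `vAv`. -/
theorem stmt15 (S : SynapticAlgebra R) {v : R} (hv : S.IsProj v) (hv0 : v ≠ 0) :
    (∀ x : R, (∃ a ∈ S.carrier, x = v * a * v) ↔
      (x ∈ S.carrier ∧ x * v = x ∧ v * x = x)) ∧
    (∀ (s : ℕ → R), (∀ n, s n ∈ S.carrier ∧ s n * v = s n ∧ v * s n = s n) →
      ∀ b ∈ S.carrier, Tendsto (fun n => S.nrm (b - s n)) atTop (nhds 0) →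
        (b ∈ S.carrier ∧ b * v = b ∧ v * b = b)) ∧
    (∀ b : R, (b ∈ S.carrier ∧ b * v = b ∧ v * b = b) →
      (∃ n : ℕ, S.le b ((n : ℝ) • v)) ∧
      (∀ t : ℝ, 0 < t →
        ((S.le (-(t • v)) b ∧ S.le b (t • v)) ↔
          (S.le (S.scal (-t)) b ∧ S.le b (S.scal t)))) ∧
      (S.nrm b = sInf {t : ℝ | 0 < t ∧ S.le (-(t • v)) b ∧ S.le b (t • v)}) ∧
      (b ∈ S.Pos → (S.sqrt b * v = S.sqrt b ∧ v * S.sqrt b = S.sqrt b)) ∧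
      (S.carr b * v = S.carr b ∧ v * S.carr b = S.carr b) ∧
      (S.le v b → ∃ c : R, (c ∈ S.carrier ∧ c * v = c ∧ v * c = c) ∧
        b * c = v ∧ c * b = v)) :=
  stmt15_general S hv
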